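/- Let f : ℝⁿ → ℝ be a C² function with min f = 0 satisfying ‖∇f(x)‖² ≥ f(x) for all x ∈ ℝⁿ, and assume K = argmin(f) is compact. Then the Hessian H = ∇²f has constant rank on K: for all x, y ∈ K, rank(H(x)) = rank(H(y)). -/

import Mathlib

/-!
At a minimiser `x` the Hessian `H` is symmetric and positive semidefinite, and letting `t → 0` in
`‖∇f (x + t v)‖² ≥ f (x + t v)` gives `⟪H v, v⟫ ≤ 2 ‖H v‖²`: every eigenvalue of `H` is `0` or at
least `1/2`. So on `range H` the quadratic form of `H` is at least `‖v‖² / 2`, any operator within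
`1/2` of `H` is injective on `range H`, and the rank of the Hessian is locally constant on
`argmin f`.

It remains to see that `argmin f` is connected. Gradient descent with a small fixed step shrinks
`f` by a fixed factor, and by the PL inequality each step is shorter than the decrease of `4 √f`.
Hence the iterates converge uniformly on a segment `[a, b]` between two minimisers, and the limit
is a continuous map from `[a, b]` into `argmin f` fixing `a` and `b`.
-/

open Module InnerProductSpace Filter Set
open scoped RealInnerProductSpace Topology

section Spectral

variable {E : Type*} [NormedAddCommGroup E] [InnerProductSpace ℝ E] [FiniteDimensional ℝ E]

theorem LinearMap.IsSymmetric.norm_sq_le_mul_inner_of_mem_range {T : E →ₗ[ℝ] E} {c : ℝ}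
    (hT : T.IsSymmetric) (hpsd : ∀ v, 0 ≤ ⟪T v, v⟫) (hgap : ∀ v, ⟪T v, v⟫ ≤ c * ‖T v‖ ^ 2)
    {v : E} (hv : v ∈ LinearMap.range T) : ‖v‖ ^ 2 ≤ c * ⟪T v, v⟫ := by
  set b := hT.eigenvectorBasis rfl
  set μ := hT.eigenvalues rfl
  have hTb (i) : T (b i) = μ i • b i := hT.apply_eigenvectorBasis rfl i
  have hμ (i) : μ i = 0 ∨ 1 ≤ c * μ i := by
    have h0 := hpsd (b i)
    have h1 := hgap (b i)
    simp only [hTb, real_inner_smul_left, real_inner_self_eq_norm_sq, norm_smul,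
      b.orthonormal.1 i, Real.norm_eq_abs, mul_pow, sq_abs] at h0 h1
    rcases (show 0 ≤ μ i by simpa using h0).eq_or_lt with h | h
    · exact .inl h.symm
    · exact .inr (by nlinarith)
  have hcoord (u i) : ⟪b i, T u⟫ = μ i * ⟪b i, u⟫ := by
    rw [← hT, hTb, real_inner_smul_left]
  have hquad (u) : ⟪T u, u⟫ = ∑ i, μ i * ⟪b i, u⟫ ^ 2 := by
    rw [← b.sum_inner_mul_inner]
    refine Finset.sum_congr rfl fun i _ => ?_
    rw [real_inner_comm, hcoord]; ring
  obtain ⟨w, rfl⟩ := hv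
  rw [hquad, ← b.sum_sq_inner_right, Finset.mul_sum]
  refine Finset.sum_le_sum fun i _ => ?_
  rcases hμ i with h | h
  · simp [hcoord, h]
  · nlinarith [sq_nonneg ⟪b i, T w⟫]

theorem finrank_range_le_of_norm_sub_mul_lt {T S : E →L[ℝ] E} {c : ℝ}
    (hT : (T : E →ₗ[ℝ] E).IsSymmetric) (hpsd : ∀ v, 0 ≤ ⟪T v, v⟫)
    (hgap : ∀ v, ⟪T v, v⟫ ≤ c * ‖T v‖ ^ 2) (hTS : ‖T - S‖ * c < 1) :
    finrank ℝ (LinearMap.range (T : E →ₗ[ℝ] E)) ≤ finrank ℝ (LinearMap.range (S : E →ₗ[ℝ] E)) := by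
  set φ := (S : E →ₗ[ℝ] E) ∘ₗ (LinearMap.range (T : E →ₗ[ℝ] E)).subtype
  have hφ : LinearMap.ker φ = ⊥ := by
    refine LinearMap.ker_eq_bot'.2 fun ⟨v, hv⟩ hSv => Subtype.ext ?_
    replace hSv : S v = 0 := hSv
    have h1 : ‖v‖ ^ 2 ≤ c * ⟪T v, v⟫ := hT.norm_sq_le_mul_inner_of_mem_range hpsd hgap hv
    have h2 : ⟪T v, v⟫ ≤ ‖T - S‖ * ‖v‖ ^ 2 := by
      calc ⟪T v, v⟫ = ⟪(T - S) v, v⟫ := by simp [hSv]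
        _ ≤ ‖(T - S) v‖ * ‖v‖ := real_inner_le_norm _ _
        _ ≤ ‖T - S‖ * ‖v‖ * ‖v‖ := by gcongr; exact (T - S).le_opNorm v
        _ = ‖T - S‖ * ‖v‖ ^ 2 := by ring
    have h3 := hpsd v
    have : ‖v‖ ^ 2 ≤ 0 := by
      rcases le_total 0 c with hc | hc <;> nlinarith [norm_nonneg (T - S), sq_nonneg ‖v‖]
    simpa using this
  calc finrank ℝ (LinearMap.range (T : E →ₗ[ℝ] E)) = finrank ℝ (LinearMap.range φ) :=
        (LinearMap.finrank_range_of_inj (LinearMap.ker_eq_bot.1 hφ)).symm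
    _ ≤ _ := Submodule.finrank_mono (LinearMap.range_comp_le_range _ _)

end Spectral

theorem HasFDerivAt.tendsto_inv_smul_apply_add_smul {E F : Type*} [NormedAddCommGroup E]
    [NormedSpace ℝ E] [NormedAddCommGroup F] [NormedSpace ℝ F] {g : E → F} {x : E}
    {g' : E →L[ℝ] F} (hg : HasFDerivAt g g' x) (hx : g x = 0) (v : E) :
    Tendsto (fun t : ℝ => t⁻¹ • g (x + t • v)) (𝓝[≠] 0) (𝓝 (g' v)) := by
  have hline : HasDerivAt (fun t : ℝ => x + t • v) v 0 := by
    simpa using ((hasDerivAt_id (0 : ℝ)).smul_const v).const_add x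
  have hg0 : HasFDerivAt g g' (x + (0 : ℝ) • v) := by simpa using hg
  simpa [hx] using (hg0.comp_hasDerivAt 0 hline).tendsto_slope_zero

section Iterate

variable {X : Type*} {T : X → X} {V : X → ℝ} {D : Set X}

theorem dist_iterate_le_sub [MetricSpace X] (hT : MapsTo T D D)
    (hdist : ∀ x ∈ D, dist (T x) x ≤ V x - V (T x)) {x : X} (hx : x ∈ D) (k : ℕ) :
    dist (T^[k] x) x ≤ V x - V (T^[k] x) := by
  induction k with
  | zero => simp
  | succ k ih =>
    rw [Function.iterate_succ_apply']
    linarith [dist_triangle (T (T^[k] x)) (T^[k] x) x, hdist _ (hT.iterate k hx)]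

theorem iterate_le_pow_mul {ρ : ℝ} (hT : MapsTo T D D) (hρ0 : 0 ≤ ρ)
    (hρ : ∀ x ∈ D, V (T x) ≤ ρ * V x) {x : X} (hx : x ∈ D) (k : ℕ) :
    V (T^[k] x) ≤ ρ ^ k * V x := by
  induction k with
  | zero => simp
  | succ k ih =>
    rw [Function.iterate_succ_apply', pow_succ', mul_assoc]
    exact (hρ _ (hT.iterate k hx)).trans (mul_le_mul_of_nonneg_left ih hρ0)

theorem exists_tendstoUniformlyOn_iterate [MetricSpace X] [CompleteSpace X] {ρ B : ℝ} {S : Set X}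
    (hT : MapsTo T D D) (hV : ∀ x ∈ D, 0 ≤ V x)
    (hdist : ∀ x ∈ D, dist (T x) x ≤ V x - V (T x)) (hρ0 : 0 ≤ ρ) (hρ1 : ρ < 1)
    (hρ : ∀ x ∈ D, V (T x) ≤ ρ * V x) (hSD : S ⊆ D) (hB : ∀ x ∈ S, V x ≤ B) :
    ∃ P : X → X, TendstoUniformlyOn (fun k => T^[k]) P atTop S := by
  rcases S.eq_empty_or_nonempty with rfl | ⟨x₀, -⟩
  · exact ⟨id, by simp [TendstoUniformlyOn]⟩
  have : Nonempty X := ⟨x₀⟩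
  have hcauchy (x) (hx : x ∈ S) (k m : ℕ) (hkm : k ≤ m) :
      dist (T^[k] x) (T^[m] x) ≤ ρ ^ k * B := by
    have hk := hT.iterate k (hSD hx)
    rw [dist_comm, ← Nat.sub_add_cancel hkm, Function.iterate_add_apply]
    calc dist (T^[m - k] (T^[k] x)) (T^[k] x) ≤ V (T^[k] x) - V (T^[m - k] (T^[k] x)) :=
          dist_iterate_le_sub hT hdist hk _
      _ ≤ ρ ^ k * V x := by
          linarith [hV _ (hT.iterate (m - k) hk), iterate_le_pow_mul hT hρ0 hρ (hSD hx) k]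
      _ ≤ ρ ^ k * B := mul_le_mul_of_nonneg_left (hB x hx) (pow_nonneg hρ0 k)
  have hlim : Tendsto (fun k => ρ ^ k * B) atTop (𝓝 0) := by
    simpa using (tendsto_pow_atTop_nhds_zero_of_lt_one hρ0 hρ1).mul_const B
  have hconv (x) (hx : x ∈ S) :
      Tendsto (fun k => T^[k] x) atTop (𝓝 (limUnder atTop fun k => T^[k] x)) :=
    tendsto_nhds_limUnder (cauchySeq_tendsto_of_complete
      (cauchySeq_of_le_tendsto_0' _ (hcauchy x hx) hlim))
  refine ⟨fun x => limUnder atTop fun k => T^[k] x, Metric.tendstoUniformlyOn_iff.2 fun ε hε => ?_⟩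
  filter_upwards [hlim.eventually (gt_mem_nhds hε)] with k hk x hx
  refine lt_of_le_of_lt ?_ hk
  rw [dist_comm]
  exact le_of_tendsto ((tendsto_const_nhds (x := T^[k] x)).dist (hconv x hx))
    (eventually_atTop.2 ⟨k, hcauchy x hx k⟩)

end Iterate

section Gradient

variable {E : Type*} [NormedAddCommGroup E] [InnerProductSpace ℝ E] [CompleteSpace E]
  {f : E → ℝ} {x : E}

theorem ContDiff.gradient {n : WithTop ℕ∞} (hf : ContDiff ℝ (n + 1) f) :
    ContDiff ℝ n (gradient f) :=
  (toDual ℝ E).symm.toContinuousLinearEquiv.contDiff.comp (hf.fderiv_right le_rfl)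

theorem inner_fderiv_gradient_apply (u v : E) :
    ⟪fderiv ℝ (gradient f) x u, v⟫ = fderiv ℝ (fderiv ℝ f) x u v := by
  rw [← toDual_comp_gradient, LinearIsometryEquiv.comp_fderiv]
  rfl

theorem ContDiffAt.inner_fderiv_gradient_comm (hf : ContDiffAt ℝ 2 f x) (u v : E) :
    ⟪fderiv ℝ (gradient f) x u, v⟫ = ⟪u, fderiv ℝ (gradient f) x v⟫ := by
  rw [inner_fderiv_gradient_apply, real_inner_comm, inner_fderiv_gradient_apply]
  exact (hf.isSymmSndFDerivAt (by simp)).eq u v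

theorem gradient_eq_zero_of_isLocalMin (h : IsLocalMin f x) : gradient f x = 0 := by
  simp [gradient, h.fderiv_eq_zero]

theorem tendsto_div_sq_of_hasFDerivAt_gradient (hf : Differentiable ℝ f) {H : E →L[ℝ] E}
    (hH : HasFDerivAt (gradient f) H x) (hfx : f x = 0) (hx : gradient f x = 0) (v : E) :
    Tendsto (fun t : ℝ => f (x + t • v) / t ^ 2) (𝓝[≠] 0) (𝓝 (⟪H v, v⟫ / 2)) := by
  have hline (t : ℝ) : HasDerivAt (fun t : ℝ => x + t • v) v t := by
    simpa using ((hasDerivAt_id t).smul_const v).const_add x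
  have hderiv (t : ℝ) : HasDerivAt (fun t => f (x + t • v)) ⟪gradient f (x + t • v), v⟫ t := by
    rw [inner_gradient_left]
    exact (hf _).hasFDerivAt.comp_hasDerivAt t (hline t)
  refine HasDerivAt.lhopital_zero_nhdsNE (.of_forall hderiv)
    (.of_forall fun t => by simpa using hasDerivAt_pow 2 t)
    (eventually_nhdsWithin_of_forall fun t ht => by simpa using ht) ?_ ?_ ?_
  · simpa [hfx] using (hderiv 0).continuousAt.tendsto.mono_left nhdsWithin_le_nhds
  · exact ((continuous_pow 2).tendsto' (0 : ℝ) 0 (by simp)).mono_left nhdsWithin_le_nhds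
  · have := ((hH.tendsto_inv_smul_apply_add_smul hx v).inner
      (tendsto_const_nhds (x := v))).div_const (2 : ℝ)
    refine this.congr' (eventually_nhdsWithin_of_forall fun t ht => ?_)
    simp only [real_inner_smul_left]
    field_simp

theorem inner_fderiv_gradient_self_nonneg (hf : Differentiable ℝ f) {H : E →L[ℝ] E}
    (hH : HasFDerivAt (gradient f) H x) (hpos : ∀ y, 0 ≤ f y) (hfx : f x = 0) (v : E) :
    0 ≤ ⟪H v, v⟫ := by
  have hmin : IsLocalMin f x := .of_forall fun y => hfx ▸ hpos y
  have := ge_of_tendsto (tendsto_div_sq_of_hasFDerivAt_gradient hf hH hfx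
    (gradient_eq_zero_of_isLocalMin hmin) v) (.of_forall fun t => div_nonneg (hpos _) (sq_nonneg t))
  linarith

theorem inner_fderiv_gradient_self_le_two_mul_norm_sq (hf : Differentiable ℝ f) {H : E →L[ℝ] E}
    (hH : HasFDerivAt (gradient f) H x) (hPL : ∀ y, f y ≤ ‖gradient f y‖ ^ 2) (hfx : f x = 0)
    (hx : gradient f x = 0) (v : E) : ⟪H v, v⟫ ≤ 2 * ‖H v‖ ^ 2 := by
  have hgrad := ((hH.tendsto_inv_smul_apply_add_smul hx v).norm).pow 2
  have := le_of_tendsto_of_tendsto (tendsto_div_sq_of_hasFDerivAt_gradient hf hH hfx hx v) hgrad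
    (.of_forall fun t => ?_)
  · linarith
  · dsimp only
    rw [norm_smul, mul_pow, norm_inv, Real.norm_eq_abs, inv_pow, sq_abs, div_eq_inv_mul]
    exact mul_le_mul_of_nonneg_left (hPL _) (by positivity)

theorem abs_sub_sub_inner_gradient_le {p q : E} {C : ℝ}
    (hf : ∀ y ∈ segment ℝ p q, DifferentiableAt ℝ f y)
    (hC : ∀ y ∈ segment ℝ p q, ‖gradient f y - gradient f p‖ ≤ C) :
    |f q - f p - ⟪gradient f p, q - p⟫| ≤ C * ‖q - p‖ := by
  have hφ (y) (hy : y ∈ segment ℝ p q) : HasFDerivWithinAt (fun y => f y - ⟪gradient f p, y⟫)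
      (toDual ℝ E (gradient f y - gradient f p)) (segment ℝ p q) y := by
    rw [map_sub, toDual_gradient]
    exact ((hf y hy).hasFDerivAt.sub (innerSL ℝ (gradient f p)).hasFDerivAt).hasFDerivWithinAt
  have := (convex_segment p q).norm_image_sub_le_of_norm_hasFDerivWithin_le hφ
    (fun y hy => (LinearIsometryEquiv.norm_map _ _).trans_le (hC y hy))
    (left_mem_segment ℝ p q) (right_mem_segment ℝ p q)
  rwa [← Real.norm_eq_abs, inner_sub_right, sub_sub_sub_comm]

noncomputable def gradientStep (f : E → ℝ) (t : ℝ) (x : E) : E := x - t • gradient f x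

theorem apply_gradientStep_le_sub (hf : Differentiable ℝ f) {t : ℝ} {L : NNReal}
    (ht : 0 ≤ t) (htL : t * L ≤ 1 / 2)
    (hL : LipschitzOnWith L (gradient f) (segment ℝ x (gradientStep f t x))) :
    f (gradientStep f t x) ≤ f x - t / 2 * ‖gradient f x‖ ^ 2 := by
  set q := gradientStep f t x
  have hq : q - x = -(t • gradient f x) := by simp [q, gradientStep]
  have hnorm : ‖q - x‖ = t * ‖gradient f x‖ := by
    rw [hq, norm_neg, norm_smul, Real.norm_of_nonneg ht]
  have := abs_sub_sub_inner_gradient_le (fun y _ => hf y) fun y hy =>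
    (hL.norm_sub_le hy (left_mem_segment ℝ x q)).trans
      (mul_le_mul_of_nonneg_left (norm_sub_le_of_mem_segment hy) L.2)
  rw [hq, inner_neg_right, real_inner_smul_right, real_inner_self_eq_norm_sq, ← hq, hnorm] at this
  have := (abs_le.1 this).2
  nlinarith [mul_le_mul_of_nonneg_right htL (mul_nonneg ht (sq_nonneg ‖gradient f x‖))]

theorem mul_le_four_mul_sqrt_sub_sqrt {F F' a t : ℝ} (hF' : 0 ≤ F') (ha : 0 ≤ a) (ht : 0 ≤ t)
    (hFa : F ≤ a ^ 2) (hdec : F' ≤ F - t / 2 * a ^ 2) : t * a ≤ 4 * (√F - √F') := by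
  have hF : 0 ≤ F := by nlinarith [sq_nonneg a]
  have hs := Real.sq_sqrt hF
  have hs' := Real.sq_sqrt hF'
  have hsa : √F ≤ a := Real.sqrt_le_iff.2 ⟨ha, hFa⟩
  have hss' : √F' ≤ √F := Real.sqrt_le_sqrt (by nlinarith [sq_nonneg a])
  have hprod : t / 2 * a ^ 2 ≤ (√F - √F') * (2 * a) := by
    nlinarith [Real.sqrt_nonneg F', mul_le_mul_of_nonneg_left (show √F + √F' ≤ 2 * a by linarith)
      (sub_nonneg.2 hss')]
  rcases ha.eq_or_lt with rfl | ha
  · linarith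
  · nlinarith

theorem dist_gradientStep_le_and_sqrt_apply_le (hf : Differentiable ℝ f) (hpos : ∀ y, 0 ≤ f y)
    (hPL : f x ≤ ‖gradient f x‖ ^ 2) {t : ℝ} {L : NNReal} (ht : 0 ≤ t) (htL : t * L ≤ 1 / 2)
    (hL : LipschitzOnWith L (gradient f) (segment ℝ x (gradientStep f t x))) :
    dist (gradientStep f t x) x ≤ 4 * √(f x) - 4 * √(f (gradientStep f t x)) ∧
      √(f (gradientStep f t x)) ≤ √(1 - t / 2) * √(f x) := by
  have hdec := apply_gradientStep_le_sub hf ht htL hL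
  constructor
  · rw [dist_eq_norm, gradientStep, sub_sub_cancel_left, norm_neg, norm_smul,
      Real.norm_of_nonneg ht, ← mul_sub]
    exact mul_le_four_mul_sqrt_sub_sqrt (hpos _) (norm_nonneg _) ht hPL hdec
  · rw [← Real.sqrt_mul' _ (hpos x)]
    exact Real.sqrt_le_sqrt (by nlinarith)

theorem exists_gradientStep_mapsTo [FiniteDimensional ℝ E] (hf : ContDiff ℝ 2 f)
    (hpos : ∀ y, 0 ≤ f y) (hPL : ∀ y, f y ≤ ‖gradient f y‖ ^ 2) (R : ℝ) :
    ∃ t ρ, 0 ≤ ρ ∧ ρ < 1 ∧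
      MapsTo (gradientStep f t) {x | ‖x‖ + 4 * √(f x) ≤ R} {x | ‖x‖ + 4 * √(f x) ≤ R} ∧
      ∀ x, ‖x‖ + 4 * √(f x) ≤ R →
        dist (gradientStep f t x) x ≤ 4 * √(f x) - 4 * √(f (gradientStep f t x)) ∧
        4 * √(f (gradientStep f t x)) ≤ ρ * (4 * √(f x)) := by
  obtain ⟨L, hL⟩ := ((hf.gradient (n := 1)).contDiffOn
    (s := Metric.closedBall 0 (R + 1))).exists_lipschitzOnWith one_ne_zero
    (convex_closedBall 0 (R + 1)) (isCompact_closedBall 0 (R + 1))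
  obtain ⟨G, hG⟩ := (isCompact_closedBall (0 : E) R).exists_bound_of_continuousOn
    (hf.gradient (n := 1)).continuous.continuousOn
  -- `t * L ≤ 1 / 2` gives sufficient decrease, `t * |G| ≤ 1` keeps each step in the ball where
  -- `L` is a Lipschitz constant of `∇f`
  set t := (2 * L + |G| + 1 : ℝ)⁻¹
  have ht : 0 < t := by positivity
  have htL : t * L ≤ 1 / 2 := by
    rw [inv_mul_le_iff₀ (by positivity)]; linarith [abs_nonneg G]
  have htG : t * |G| ≤ 1 := by
    rw [inv_mul_le_iff₀ (by positivity)]; linarith [L.2]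
  have hstep (x) (hx : ‖x‖ + 4 * √(f x) ≤ R) :
      dist (gradientStep f t x) x ≤ 4 * √(f x) - 4 * √(f (gradientStep f t x)) ∧
      √(f (gradientStep f t x)) ≤ √(1 - t / 2) * √(f x) := by
    have hxR : ‖x‖ ≤ R := by linarith [Real.sqrt_nonneg (f x)]
    have hmove : ‖gradientStep f t x - x‖ ≤ 1 := by
      rw [gradientStep, sub_sub_cancel_left, norm_neg, norm_smul, Real.norm_of_nonneg ht.le]
      exact (mul_le_mul_of_nonneg_left ((hG x (by simpa using hxR)).trans (le_abs_self G))
        ht.le).trans htG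
    refine dist_gradientStep_le_and_sqrt_apply_le (hf.differentiable (by norm_num)) hpos (hPL x)
      ht.le htL (hL.mono ((convex_closedBall _ _).segment_subset ?_ ?_))
    · simp only [Metric.mem_closedBall, dist_zero_right]; linarith
    · simp only [Metric.mem_closedBall, dist_zero_right]
      linarith [norm_le_norm_add_norm_sub' (gradientStep f t x) x]
  refine ⟨t, √(1 - t / 2), Real.sqrt_nonneg _, (Real.sqrt_lt' one_pos).2 (by linarith), ?_,
    fun x hx => ⟨(hstep x hx).1, by linarith [(hstep x hx).2]⟩⟩
  intro x hx
  have := (hstep x hx).1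
  rw [dist_eq_norm] at this
  simp only [mem_ofPred_eq] at hx ⊢
  linarith [norm_le_norm_add_norm_sub' (gradientStep f t x) x]

theorem continuous_gradientStep (hf : ContDiff ℝ 2 f) (t : ℝ) : Continuous (gradientStep f t) :=
  continuous_id.sub (continuous_const.smul (hf.gradient (n := 1)).continuous)

theorem exists_tendstoUniformlyOn_iterate_gradientStep [FiniteDimensional ℝ E]
    (hf : ContDiff ℝ 2 f) (hpos : ∀ y, 0 ≤ f y) (hPL : ∀ y, f y ≤ ‖gradient f y‖ ^ 2)
    {S : Set E} (hS : IsCompact S) :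
    ∃ t P, TendstoUniformlyOn (fun k => (gradientStep f t)^[k]) P atTop S ∧
      ∀ x ∈ S, f (P x) = 0 := by
  obtain ⟨R, hR⟩ := hS.isBounded.subset_closedBall 0
  obtain ⟨M, hM⟩ := hS.exists_bound_of_continuousOn hf.continuous.continuousOn
  have hSM (x) (hx : x ∈ S) : 4 * √(f x) ≤ 4 * √M := by
    gcongr; exact (le_abs_self _).trans (hM x hx)
  obtain ⟨t, ρ, hρ0, hρ1, hmaps, hstep⟩ := exists_gradientStep_mapsTo hf hpos hPL (R + 4 * √M)
  set D := {x | ‖x‖ + 4 * √(f x) ≤ R + 4 * √M}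
  have hSD : S ⊆ D := fun x hx => by
    have := hR hx
    simp only [Metric.mem_closedBall, dist_zero_right] at this
    exact add_le_add this (hSM x hx)
  have hV (x : E) : 0 ≤ 4 * √(f x) := by positivity
  have hρ (x) (hx : x ∈ D) := (hstep x hx).2
  obtain ⟨P, hP⟩ := exists_tendstoUniformlyOn_iterate hmaps (fun x _ => hV x)
    (fun x hx => (hstep x hx).1) hρ0 hρ1 hρ hSD hSM
  refine ⟨t, P, hP, fun x hx => ?_⟩
  have hlim := ((hf.continuous.sqrt.const_mul 4).tendsto (P x)).comp (hP.tendsto_at hx)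
  have hdecay : Tendsto (fun k => 4 * √(f ((gradientStep f t)^[k] x))) atTop (𝓝 0) :=
    squeeze_zero (fun k => hV _)
      (fun k => iterate_le_pow_mul (V := fun x => 4 * √(f x)) hmaps hρ0 hρ (hSD hx) k)
      (by simpa using (tendsto_pow_atTop_nhds_zero_of_lt_one hρ0 hρ1).mul_const (4 * √(f x)))
  have := tendsto_nhds_unique hlim hdecay
  simp only [mul_eq_zero, four_ne_zero, false_or] at this
  exact le_antisymm (Real.sqrt_eq_zero'.1 this) (hpos _)

theorem isPreconnected_setOf_eq_zero [FiniteDimensional ℝ E] (hf : ContDiff ℝ 2 f)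
    (hpos : ∀ y, 0 ≤ f y) (hPL : ∀ y, f y ≤ ‖gradient f y‖ ^ 2) :
    IsPreconnected {x | f x = 0} := by
  refine isPreconnected_of_forall_pair fun a ha b hb => ?_
  have hS : IsCompact (segment ℝ a b) := by
    rw [segment_eq_image]
    exact isCompact_Icc.image (by fun_prop)
  obtain ⟨t, P, hP, hPK⟩ := exists_tendstoUniformlyOn_iterate_gradientStep hf hpos hPL hS
  have hfix (x) (hx : f x = 0) (hxS : x ∈ segment ℝ a b) : P x = x := by
    have hTx : gradientStep f t x = x := by
      simp [gradientStep, gradient_eq_zero_of_isLocalMin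
        (show IsLocalMin f x from .of_forall fun y => hx ▸ hpos y)]
    refine tendsto_nhds_unique (hP.tendsto_at hxS) ?_
    simp only [Function.iterate_fixed hTx, tendsto_const_nhds]
  refine ⟨P '' segment ℝ a b, image_subset_iff.2 hPK,
    ⟨a, left_mem_segment ℝ a b, hfix a ha (left_mem_segment ℝ a b)⟩,
    ⟨b, right_mem_segment ℝ a b, hfix b hb (right_mem_segment ℝ a b)⟩,
    (convex_segment a b).isPreconnected.image P (hP.continuousOn ?_)⟩
  exact .of_forall fun k => ((continuous_gradientStep hf t).iterate k).continuousOn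

theorem finrank_range_fderiv_gradient_le [FiniteDimensional ℝ E] (hf : ContDiff ℝ 2 f)
    (hpos : ∀ y, 0 ≤ f y) (hPL : ∀ y, f y ≤ ‖gradient f y‖ ^ 2) (hx : f x = 0) {y : E}
    (hxy : ‖fderiv ℝ (gradient f) x - fderiv ℝ (gradient f) y‖ < 1 / 2) :
    finrank ℝ (LinearMap.range (fderiv ℝ (gradient f) x : E →ₗ[ℝ] E)) ≤
      finrank ℝ (LinearMap.range (fderiv ℝ (gradient f) y : E →ₗ[ℝ] E)) := by
  have hd : Differentiable ℝ f := hf.differentiable (by norm_num)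
  have hH : HasFDerivAt (gradient f) (fderiv ℝ (gradient f) x) x :=
    ((hf.gradient (n := 1)).differentiable one_ne_zero x).hasFDerivAt
  have h0 := gradient_eq_zero_of_isLocalMin (.of_forall fun y => hx ▸ hpos y : IsLocalMin f x)
  exact finrank_range_le_of_norm_sub_mul_lt (c := 2) (hf.contDiffAt.inner_fderiv_gradient_comm)
    (inner_fderiv_gradient_self_nonneg hd hH hpos hx)
    (inner_fderiv_gradient_self_le_two_mul_norm_sq hd hH hPL hx h0) (by linarith)

end Gradient

theorem pl_hessian_constant_rank_general (n : ℕ) (f : EuclideanSpace ℝ (Fin n) → ℝ)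
    (hf : ContDiff ℝ 2 f) (hpos : ∀ x, 0 ≤ f x)
    (hPL : ∀ x, ‖gradient f x‖ ^ 2 ≥ f x) :
    ∀ x ∈ {x | f x = 0}, ∀ y ∈ {x | f x = 0},
      Module.finrank ℝ (LinearMap.range (fderiv ℝ (gradient f) x :
          EuclideanSpace ℝ (Fin n) →ₗ[ℝ] EuclideanSpace ℝ (Fin n))) =
      Module.finrank ℝ (LinearMap.range (fderiv ℝ (gradient f) y :
          EuclideanSpace ℝ (Fin n) →ₗ[ℝ] EuclideanSpace ℝ (Fin n))) := by
  intro x hx y hy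
  have hH : Continuous (fderiv ℝ (gradient f)) :=
    (hf.gradient (n := 1)).continuous_fderiv one_ne_zero
  refine (isPreconnected_setOf_eq_zero hf hpos hPL).constant
    (f := fun z => finrank ℝ (LinearMap.range (fderiv ℝ (gradient f) z :
      EuclideanSpace ℝ (Fin n) →ₗ[ℝ] EuclideanSpace ℝ (Fin n)))) (fun z hz => ?_) hx hy
  refine tendsto_nhds_of_eventually_eq ?_
  filter_upwards [self_mem_nhdsWithin,
    nhdsWithin_le_nhds (Metric.tendsto_nhds.1 hH.continuousAt (1 / 2) (by norm_num))] with w hw hwz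
  rw [dist_eq_norm] at hwz
  exact le_antisymm (finrank_range_fderiv_gradient_le hf hpos hPL hw hwz)
    (finrank_range_fderiv_gradient_le hf hpos hPL hz (by rwa [norm_sub_rev]))

/-- The Hessian of a `C²` function with `min f = 0` satisfying
`‖∇f‖² ≥ f` and compact argmin has constant rank on the set of minimizers. -/
theorem pl_hessian_constant_rank (n : ℕ) (f : EuclideanSpace ℝ (Fin n) → ℝ)
    (hf : ContDiff ℝ 2 f) (hpos : ∀ x, 0 ≤ f x) (hmin : ∃ x, f x = 0)
    (hPL : ∀ x, ‖gradient f x‖ ^ 2 ≥ f x)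
    (hcpt : IsCompact {x | f x = 0}) :
    ∀ x ∈ {x | f x = 0}, ∀ y ∈ {x | f x = 0},
      Module.finrank ℝ (LinearMap.range (fderiv ℝ (gradient f) x :
          EuclideanSpace ℝ (Fin n) →ₗ[ℝ] EuclideanSpace ℝ (Fin n))) =
      Module.finrank ℝ (LinearMap.range (fderiv ℝ (gradient f) y :
          EuclideanSpace ℝ (Fin n) →ₗ[ℝ] EuclideanSpace ℝ (Fin n))) :=
  pl_hessian_constant_rank_general n f hf hpos hPL
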